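/- If a k-superior edge set E_k is inserted into a graph G, then for every vertex v with core_G(v) ≠ k, the core number of v does not change. -/

import Mathlib

open SimpleGraph

/-!
Inserting the edges of `S` can only raise core numbers, so it suffices to show that a vertex `v`
of `(G ⊔ S)`-core number at least `m = core_G(v) + 1 ≠ k + 1` already has `G`-core number at least
`m`. Take a vertex set `U ∋ v` in which every vertex has at least `m` neighbours of `G ⊔ S`, and
enlarge it by the `G`-vertices of core number at least `m`; it remains to see that the vertices of
`U` of `G`-core number below `m` still have `m` neighbours in `U` using edges of `G` alone.

* If `m ≤ k`, such vertices touch no edge of `S`, whose endpoints have core number at least `k`.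
* If `m ≥ k + 2`, do this first for `k + 1` instead of `m`: a vertex of core number at most `k`
  lies on at most one edge of `S`. So all of `U` has `G`-core number above `k`, while every edge
  of `S` has an endpoint of core number `k`; hence no edge of `S` lies inside `U`.
-/

/-- The core number of a vertex: the largest `k` such that the vertex lies in a
subgraph of `G` with minimum degree at least `k`. -/
noncomputable def coreNumber {V : Type*} (G : SimpleGraph V) (v : V) : ℕ :=
  sSup {k : ℕ | ∃ H : G.Subgraph, v ∈ H.verts ∧ ∀ w ∈ H.verts, k ≤ (H.neighborSet w).ncard}

/-- `S` is a `k`-superior edge set of new edges with respect to `G`. -/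
def IsKSuperiorInsertSet {V : Type*} (G : SimpleGraph V) (k : ℕ) (S : Set (Sym2 V)) : Prop :=
  (∀ e ∈ S, e ∉ G.edgeSet ∧ ∃ u v : V, u ≠ v ∧ e = s(u,v) ∧
      coreNumber G u = k ∧ coreNumber G u ≤ coreNumber G v) ∧
  ∀ e₁ ∈ S, ∀ e₂ ∈ S, e₁ ≠ e₂ → ∀ u : V, u ∈ e₁ → u ∈ e₂ → k < coreNumber G u

section CoreSet

variable {V : Type*}

def IsCoreSet (G : SimpleGraph V) (m : ℕ) (U : Set V) : Prop :=
  ∀ w ∈ U, m ≤ (G.neighborSet w ∩ U).ncard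

variable [Finite V] {G G' : SimpleGraph V} {m : ℕ} {U : Set V} {v : V}

lemma IsCoreSet.mono (h : G ≤ G') (hU : IsCoreSet G m U) : IsCoreSet G' m U := fun w hw =>
  (hU w hw).trans <| Set.ncard_le_ncard (Set.inter_subset_inter_left _ fun _ hx => h hx)

lemma coreNumber_bddAbove (G : SimpleGraph V) (v : V) :
    BddAbove {k : ℕ | ∃ H : G.Subgraph, v ∈ H.verts ∧
      ∀ w ∈ H.verts, k ≤ (H.neighborSet w).ncard} :=
  ⟨Nat.card V, fun _ ⟨_, hv, hdeg⟩ => (hdeg v hv).trans (Set.ncard_le_card _)⟩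

lemma le_coreNumber_iff : m ≤ coreNumber G v ↔ ∃ U, v ∈ U ∧ IsCoreSet G m U := by
  constructor
  · intro hm
    have hzero : (0 : ℕ) ∈ {k : ℕ | ∃ H : G.Subgraph, v ∈ H.verts ∧
        ∀ w ∈ H.verts, k ≤ (H.neighborSet w).ncard} :=
      ⟨G.singletonSubgraph v, rfl, fun _ _ => Nat.zero_le _⟩
    obtain ⟨H, hv, hdeg⟩ := Nat.sSup_mem ⟨0, hzero⟩ (coreNumber_bddAbove G v)
    refine ⟨H.verts, hv, fun w hw => (hm.trans (hdeg w hw)).trans (Set.ncard_le_ncard ?_)⟩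
    exact fun x hx => ⟨H.adj_sub hx, H.edge_vert hx.symm⟩
  · rintro ⟨U, hv, hU⟩
    refine le_csSup (coreNumber_bddAbove G v)
      ⟨(⊤ : G.Subgraph).induce U, hv, fun w (hw : w ∈ U) => ?_⟩
    convert hU w hw using 2
    ext x
    simp [hw, and_comm]

lemma coreNumber_mono (h : G ≤ G') (v : V) : coreNumber G v ≤ coreNumber G' v :=
  le_coreNumber_iff.2 <| (le_coreNumber_iff.1 le_rfl).imp fun _ ⟨hv, hU⟩ => ⟨hv, hU.mono h⟩

lemma isCoreSet_setOf_le_coreNumber : IsCoreSet G m {w | m ≤ coreNumber G w} := by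
  intro w hw
  obtain ⟨U, hwU, hU⟩ := le_coreNumber_iff.1 hw
  have hsub : U ⊆ {w | m ≤ coreNumber G w} := fun x hx => le_coreNumber_iff.2 ⟨U, hx, hU⟩
  exact (hU w hwU).trans (Set.ncard_le_ncard (Set.inter_subset_inter_right _ hsub))

lemma le_coreNumber_of_forall_coreNumber_lt
    (hU : ∀ w ∈ U, coreNumber G w < m → m ≤ (G.neighborSet w ∩ U).ncard) (hv : v ∈ U) :
    m ≤ coreNumber G v := by
  refine le_coreNumber_iff.2 ⟨U ∪ {w | m ≤ coreNumber G w}, Or.inl hv, fun w hw => ?_⟩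
  by_cases hcore : m ≤ coreNumber G w
  · exact (isCoreSet_setOf_le_coreNumber w hcore).trans
      (Set.ncard_le_ncard (Set.inter_subset_inter_right _ Set.subset_union_right))
  · exact (hU w (hw.resolve_right hcore) (not_le.1 hcore)).trans
      (Set.ncard_le_ncard (Set.inter_subset_inter_right _ Set.subset_union_left))

end CoreSet

lemma ncard_neighborSet_sup_fromEdgeSet_inter_le {V : Type*} [Finite V] (G : SimpleGraph V)
    (S : Set (Sym2 V)) (w : V) (U : Set V) :
    ((G ⊔ fromEdgeSet S).neighborSet w ∩ U).ncard ≤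
      (G.neighborSet w ∩ U).ncard + ({x | s(w, x) ∈ S} ∩ U).ncard := by
  refine (Set.ncard_le_ncard ?_).trans (Set.ncard_union_le _ _)
  rintro x ⟨hx | hx, hxU⟩
  exacts [Or.inl ⟨hx, hxU⟩, Or.inr ⟨hx.1, hxU⟩]

lemma ncard_neighborSet_sup_fromEdgeSet_inter_le_of_forall_notMem {V : Type*} [Finite V]
    {G : SimpleGraph V} {S : Set (Sym2 V)} {w : V} {U : Set V} (h : ∀ x ∈ U, s(w, x) ∉ S) :
    ((G ⊔ fromEdgeSet S).neighborSet w ∩ U).ncard ≤ (G.neighborSet w ∩ U).ncard :=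
  Set.ncard_le_ncard fun x ⟨hx, hxU⟩ => ⟨hx.resolve_right fun hS => h x hxU hS.1, hxU⟩

namespace IsKSuperiorInsertSet

variable {V : Type*} {G : SimpleGraph V} {k : ℕ} {S : Set (Sym2 V)}
  (hS : IsKSuperiorInsertSet G k S)
include hS

lemma coreNumber_eq_or_eq_of_mem {a b : V} (hab : s(a, b) ∈ S) :
    coreNumber G a = k ∨ coreNumber G b = k := by
  obtain ⟨-, u, w, -, he, hu, -⟩ := hS.1 _ hab
  rcases Sym2.eq_iff.1 he with ⟨rfl, rfl⟩ | ⟨rfl, rfl⟩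
  exacts [Or.inl hu, Or.inr hu]

lemma le_coreNumber_of_mem {a b : V} (hab : s(a, b) ∈ S) : k ≤ coreNumber G a := by
  obtain ⟨-, u, w, -, he, hu, hle⟩ := hS.1 _ hab
  rcases Sym2.eq_iff.1 he with ⟨rfl, rfl⟩ | ⟨rfl, rfl⟩
  exacts [hu.ge, hu ▸ hle]

lemma subsingleton_setOf_mem {w : V} (hw : coreNumber G w ≤ k) :
    {x | s(w, x) ∈ S}.Subsingleton := by
  intro x hx y hy
  by_contra hne
  have := hS.2 _ hx _ hy (fun h => hne (Sym2.congr_right.1 h)) w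
    (Sym2.mem_mk_left w x) (Sym2.mem_mk_left w y)
  omega

variable [Finite V] {m : ℕ} {v : V}

lemma le_coreNumber_of_le (hm : m ≤ k) (h : m ≤ coreNumber (G ⊔ fromEdgeSet S) v) :
    m ≤ coreNumber G v := by
  obtain ⟨U, hvU, hU⟩ := le_coreNumber_iff.1 h
  refine le_coreNumber_of_forall_coreNumber_lt (fun w hw hlt => (hU w hw).trans ?_) hvU
  refine ncard_neighborSet_sup_fromEdgeSet_inter_le_of_forall_notMem fun x _ hx => ?_
  have := hS.le_coreNumber_of_mem hx
  omega

lemma le_coreNumber_of_add_two_le (hm : k + 2 ≤ m) (h : m ≤ coreNumber (G ⊔ fromEdgeSet S) v) :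
    m ≤ coreNumber G v := by
  obtain ⟨U, hvU, hU⟩ := le_coreNumber_iff.1 h
  have hcore : ∀ w ∈ U, k + 1 ≤ coreNumber G w := by
    refine fun u hu => le_coreNumber_of_forall_coreNumber_lt (fun w hw hlt => ?_) hu
    have hone : ({x | s(w, x) ∈ S} ∩ U).ncard ≤ 1 := Set.ncard_le_one_iff_subsingleton.2
      ((hS.subsingleton_setOf_mem (Nat.le_of_lt_succ hlt)).anti Set.inter_subset_left)
    have := ncard_neighborSet_sup_fromEdgeSet_inter_le G S w U
    have := hU w hw
    omega
  have hGU : IsCoreSet G m U := by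
    refine fun w hw => (hU w hw).trans ?_
    refine ncard_neighborSet_sup_fromEdgeSet_inter_le_of_forall_notMem fun x hxU hx => ?_
    have := hcore w hw
    have := hcore x hxU
    rcases hS.coreNumber_eq_or_eq_of_mem hx with h | h <;> omega
  exact le_coreNumber_iff.2 ⟨U, hvU, hGU⟩

lemma le_coreNumber_of_ne_add_one (hm : m ≠ k + 1) (h : m ≤ coreNumber (G ⊔ fromEdgeSet S) v) :
    m ≤ coreNumber G v := by
  rcases Nat.lt_or_gt_of_ne hm with hm | hm
  exacts [hS.le_coreNumber_of_le (by omega) h, hS.le_coreNumber_of_add_two_le (by omega) h]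

end IsKSuperiorInsertSet

theorem kSuperiorInsert_core_unchanged {V : Type*} [Fintype V] (G : SimpleGraph V)
    (k : ℕ) (S : Set (Sym2 V)) (hS : IsKSuperiorInsertSet G k S)
    (v : V) (hv : coreNumber G v ≠ k) :
    coreNumber (G ⊔ fromEdgeSet S) v = coreNumber G v := by
  refine le_antisymm ?_ (coreNumber_mono le_sup_left v)
  by_contra! hlt
  have := hS.le_coreNumber_of_ne_add_one (m := coreNumber G v + 1) (by omega) hlt
  omega
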